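/- (Lemma 2, upper bound.) For all D, D_s ≥ 0 at which R_WZ^X(D) and R_WZ^S(D_s) are finite, R_WZ(D, D_s) ≤ R_WZ^X(D) + R_WZ^S(D_s). -/

import Mathlib

open scoped BigOperators

namespace Stmt5

variable {𝒮 𝒳 𝒴 Sh Xh : Type}

/-- Marginal pmf of the observation `X` under the joint pmf `p` on `𝒮 × 𝒳 × 𝒴`. -/
noncomputable def pXm [Fintype 𝒮] [Fintype 𝒴] (p : 𝒮 × 𝒳 × 𝒴 → ℝ) : 𝒳 → ℝ :=
  fun x => ∑ s, ∑ y, p (s, x, y)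

/-- Marginal pmf of the side information `Y`. -/
noncomputable def pYm [Fintype 𝒮] [Fintype 𝒳] (p : 𝒮 × 𝒳 × 𝒴 → ℝ) : 𝒴 → ℝ :=
  fun y => ∑ s, ∑ x, p (s, x, y)

/-- Marginal pmf of the (ℕ-valued) auxiliary variable `U`, where `q x u = P(U = u | X = x)`. -/
noncomputable def pUm [Fintype 𝒮] [Fintype 𝒳] [Fintype 𝒴] (p : 𝒮 × 𝒳 × 𝒴 → ℝ)
    (q : 𝒳 → ℕ → ℝ) : ℕ → ℝ :=
  fun u => ∑ x, pXm p x * q x u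

/-- Joint pmf of `(Y, U)` under the law `P_{SXY}·P_{U|X}`. -/
noncomputable def pYUm [Fintype 𝒮] [Fintype 𝒳] (p : 𝒮 × 𝒳 × 𝒴 → ℝ)
    (q : 𝒳 → ℕ → ℝ) : 𝒴 → ℕ → ℝ :=
  fun y u => ∑ s, ∑ x, p (s, x, y) * q x u

/-- Base-2 Shannon mutual information `I(X;U)`. -/
noncomputable def IXU [Fintype 𝒮] [Fintype 𝒳] [Fintype 𝒴] (p : 𝒮 × 𝒳 × 𝒴 → ℝ)
    (q : 𝒳 → ℕ → ℝ) : ℝ :=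
  ∑ x, ∑' u, pXm p x * q x u * Real.logb 2 (q x u / pUm p q u)

/-- Base-2 Shannon mutual information `I(U;Y)`. -/
noncomputable def IUY [Fintype 𝒮] [Fintype 𝒳] [Fintype 𝒴] (p : 𝒮 × 𝒳 × 𝒴 → ℝ)
    (q : 𝒳 → ℕ → ℝ) : ℝ :=
  ∑ y, ∑' u, pYUm p q y u * Real.logb 2 (pYUm p q y u / (pYm p y * pUm p q u))

/-- Expected distortion `E[d(X, x̂(U,Y))]` on the observation. -/
noncomputable def EdX [Fintype 𝒮] [Fintype 𝒳] [Fintype 𝒴] (p : 𝒮 × 𝒳 × 𝒴 → ℝ)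
    (q : 𝒳 → ℕ → ℝ) (d : 𝒳 × Xh → ℝ) (xh : ℕ × 𝒴 → Xh) : ℝ :=
  ∑ s, ∑ x, ∑ y, ∑' u, p (s, x, y) * q x u * d (x, xh (u, y))

/-- Expected distortion `E[d_s(S, ŝ(U,Y))]` on the latent source. -/
noncomputable def EdS [Fintype 𝒮] [Fintype 𝒳] [Fintype 𝒴] (p : 𝒮 × 𝒳 × 𝒴 → ℝ)
    (q : 𝒳 → ℕ → ℝ) (ds : 𝒮 × Sh → ℝ) (sh : ℕ × 𝒴 → Sh) : ℝ :=
  ∑ s, ∑ x, ∑ y, ∑' u, p (s, x, y) * q x u * ds (s, sh (u, y))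

/-- `q` is a conditional pmf from `𝒳` to `ℕ`. -/
def IsCondPMF (q : 𝒳 → ℕ → ℝ) : Prop :=
  (∀ x u, 0 ≤ q x u) ∧ ∀ x, ∑' u, q x u = 1

/-- `(q, (x̂, ŝ))` is `(D, Ds)`-feasible. -/
def Feasible [Fintype 𝒮] [Fintype 𝒳] [Fintype 𝒴] (p : 𝒮 × 𝒳 × 𝒴 → ℝ)
    (d : 𝒳 × Xh → ℝ) (ds : 𝒮 × Sh → ℝ) (D Ds : ℝ)
    (q : 𝒳 → ℕ → ℝ) (xh : ℕ × 𝒴 → Xh) (sh : ℕ × 𝒴 → Sh) : Prop :=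
  IsCondPMF q ∧ EdX p q d xh ≤ D ∧ EdS p q ds sh ≤ Ds

/-- The indirect Wyner–Ziv rate-distortion function
`R_WZ(D, Ds) = inf { I(X;U) - I(U;Y) : (P_{U|X}, (x̂, ŝ)) is (D,Ds)-feasible }`,
with the infimum over the empty set equal to `+∞` (in `EReal`). -/
noncomputable def RWZ [Fintype 𝒮] [Fintype 𝒳] [Fintype 𝒴] (p : 𝒮 × 𝒳 × 𝒴 → ℝ)
    (d : 𝒳 × Xh → ℝ) (ds : 𝒮 × Sh → ℝ) (D Ds : ℝ) : EReal :=
  sInf { r : EReal | ∃ (q : 𝒳 → ℕ → ℝ) (xh : ℕ × 𝒴 → Xh) (sh : ℕ × 𝒴 → Sh),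
    Feasible p d ds D Ds q xh sh ∧ r = ((IXU p q - IUY p q : ℝ) : EReal) }


/-- The conventional Wyner–Ziv rate-distortion function `R_WZ^X(D)` for reconstructing the
observation `X` only (constraint `E[d(X, x̂(U,Y))] ≤ D`), over the same class of auxiliary
variables and reconstruction maps. -/
noncomputable def RWZX [Fintype 𝒮] [Fintype 𝒳] [Fintype 𝒴] (p : 𝒮 × 𝒳 × 𝒴 → ℝ)
    (d : 𝒳 × Xh → ℝ) (D : ℝ) : EReal :=
  sInf { r : EReal | ∃ (q : 𝒳 → ℕ → ℝ) (xh : ℕ × 𝒴 → Xh),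
    IsCondPMF q ∧ EdX p q d xh ≤ D ∧ r = ((IXU p q - IUY p q : ℝ) : EReal) }

/-- The conventional Wyner–Ziv rate-distortion function `R_WZ^S(Ds)` for reconstructing the
latent source `S` only (constraint `E[d_s(S, ŝ(U,Y))] ≤ Ds`). -/
noncomputable def RWZS [Fintype 𝒮] [Fintype 𝒳] [Fintype 𝒴] (p : 𝒮 × 𝒳 × 𝒴 → ℝ)
    (ds : 𝒮 × Sh → ℝ) (Ds : ℝ) : EReal :=
  sInf { r : EReal | ∃ (q : 𝒳 → ℕ → ℝ) (sh : ℕ × 𝒴 → Sh),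
    IsCondPMF q ∧ EdS p q ds sh ≤ Ds ∧ r = ((IXU p q - IUY p q : ℝ) : EReal) }


/-!
Pair near-optimal auxiliaries: `U_a` for the constraint on `X` and `U_b` for the one on `S`, and
let `U = (U_a, U_b)` with `U_a`, `U_b` conditionally independent given `X`; `U` meets both
constraints. For the Markov chain `U - X - Y`, `I(X;U) - I(U;Y) = I(X;U|Y)`, the average over
`(x, y)` of `D(P_{U|X=x} ‖ P_{U|Y=y})`. Replacing the reference `P_{U|Y=y}` by any `r` raises this
average by `D(P_{U|Y=y} ‖ r)` (compensation identity), so it is bounded by its value at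
`r = P_{U_a|Y=y} ⊗ P_{U_b|Y=y}`, which by additivity of the divergence on products is
`I(X;U_a|Y) + I(X;U_b|Y)`.
-/

open Real Finset

section KL

variable {α β : Type*}

/-- Equal to `b * klFun (a / b)` for `b ≠ 0`; for `b = 0` it is `-a` (as `log 0 = 0`). -/
noncomputable def klTerm (a b : ℝ) : ℝ := a * log (a / b) + b - a

noncomputable def klDiv (f g : α → ℝ) : ℝ := ∑' a, klTerm (f a) (g a)

lemma klTerm_zero_left (b : ℝ) : klTerm 0 b = b := by simp [klTerm]

lemma klTerm_nonneg {a b : ℝ} (ha : 0 ≤ a) (hb : 0 ≤ b) (hab : 0 < a → 0 < b) :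
    0 ≤ klTerm a b := by
  rcases ha.eq_or_lt with rfl | ha
  · rwa [klTerm_zero_left]
  have hb := hab ha
  have h : klTerm a b = b * InformationTheory.klFun (a / b) := by
    rw [InformationTheory.klFun_apply, klTerm]
    field_simp
  rw [h]
  exact mul_nonneg hb.le (InformationTheory.klFun_nonneg (div_nonneg ha.le hb.le))

lemma pos_of_le_mul {a b C : ℝ} (hb : 0 ≤ b) (h : a ≤ C * b) (ha : 0 < a) : 0 < b :=
  hb.lt_of_ne (by rintro rfl; linarith [mul_zero C])

lemma klTerm_le {a b C : ℝ} (ha : 0 ≤ a) (hb : 0 ≤ b) (h : a ≤ C * b) :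
    klTerm a b ≤ a * log C + b := by
  rcases ha.eq_or_lt with rfl | ha
  · simp [klTerm_zero_left]
  have hb := pos_of_le_mul hb h ha
  have hlog : log (a / b) ≤ log C :=
    log_le_log (div_pos ha hb) ((div_le_iff₀ hb).mpr h)
  have := mul_le_mul_of_nonneg_left hlog ha.le
  rw [klTerm]
  linarith

lemma summable_klTerm {f g : α → ℝ} (hf : Summable f) (hg : Summable g)
    (hf0 : ∀ a, 0 ≤ f a) (hg0 : ∀ a, 0 ≤ g a) {C : ℝ} (hfg : ∀ a, f a ≤ C * g a) :
    Summable fun a => klTerm (f a) (g a) :=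
  Summable.of_nonneg_of_le
    (fun a => klTerm_nonneg (hf0 a) (hg0 a) (pos_of_le_mul (hg0 a) (hfg a)))
    (fun a => klTerm_le (hf0 a) (hg0 a) (hfg a)) ((hf.mul_right _).add hg)

lemma tsum_mul_log_div {f g : α → ℝ} {s t : ℝ} (hf : HasSum f s) (hg : HasSum g t)
    (hfg : Summable fun a => klTerm (f a) (g a)) :
    ∑' a, f a * log (f a / g a) = klDiv f g + s - t := by
  have h : ∀ a, f a * log (f a / g a) = klTerm (f a) (g a) + f a - g a := fun a => by
    rw [klTerm]; ring
  rw [tsum_congr h, (hfg.add hf.summable).tsum_sub hg.summable,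
    hfg.tsum_add hf.summable, hf.tsum_eq, hg.tsum_eq, klDiv]

lemma klDiv_comp_equiv (e : β ≃ α) (f g : α → ℝ) : klDiv (f ∘ e) (g ∘ e) = klDiv f g :=
  e.tsum_eq fun a => klTerm (f a) (g a)

lemma hasSum_mul_prod {f : α → ℝ} {g : β → ℝ} {s t : ℝ} (hf : HasSum f s) (hg : HasSum g t) :
    HasSum (fun v : α × β => f v.1 * g v.2) (s * t) :=
  hf.mul hg (summable_mul_of_summable_norm hf.summable.norm hg.summable.norm)

lemma tsum_mul_prod_of_hasSum_one (f : α → ℝ) {g : β → ℝ} (hg : HasSum g 1) :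
    ∑' v : α × β, f v.1 * g v.2 = ∑' a, f a := by
  by_cases hf : Summable f
  · rw [(hasSum_mul_prod hf.hasSum hg).tsum_eq, mul_one]
  · have hfg : ¬ Summable fun v : α × β => f v.1 * g v.2 := fun h =>
      hf (h.hasSum.prod_fiberwise fun a => by simpa using hg.mul_left (f a)).summable
    rw [tsum_eq_zero_of_not_summable hf, tsum_eq_zero_of_not_summable hfg]

lemma tsum_prod_mul_of_hasSum_one {f : α → ℝ} (hf : HasSum f 1) (g : β → ℝ) :
    ∑' v : α × β, f v.1 * g v.2 = ∑' b, g b := by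
  rw [← (Equiv.prodComm β α).tsum_eq, ← tsum_mul_prod_of_hasSum_one g hf]
  exact tsum_congr fun v => mul_comm _ _

lemma klTerm_mul {a₁ b₁ a₂ b₂ : ℝ} (ha₁ : 0 ≤ a₁) (ha₂ : 0 ≤ a₂)
    (h₁ : 0 < a₁ → 0 < b₁) (h₂ : 0 < a₂ → 0 < b₂) :
    klTerm (a₁ * a₂) (b₁ * b₂) = klTerm a₁ b₁ * a₂ + a₁ * klTerm a₂ b₂ + (b₁ - a₁) * (b₂ - a₂) := by
  rcases ha₁.eq_or_lt with rfl | ha₁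
  · simp only [zero_mul, klTerm_zero_left]; ring
  rcases ha₂.eq_or_lt with rfl | ha₂
  · simp only [mul_zero, klTerm_zero_left]; ring
  have hb₁ := h₁ ha₁
  have hb₂ := h₂ ha₂
  simp only [klTerm]
  rw [mul_div_mul_comm, log_mul (div_pos ha₁ hb₁).ne' (div_pos ha₂ hb₂).ne']
  ring

lemma hasSum_klTerm_prod {f₁ g₁ : α → ℝ} {f₂ g₂ : β → ℝ}
    (hf₁ : HasSum f₁ 1) (hg₁ : HasSum g₁ 1) (hf₂ : HasSum f₂ 1) (hg₂ : HasSum g₂ 1)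
    (hf₁0 : ∀ a, 0 ≤ f₁ a) (hf₂0 : ∀ b, 0 ≤ f₂ b)
    (h₁ : ∀ a, 0 < f₁ a → 0 < g₁ a) (h₂ : ∀ b, 0 < f₂ b → 0 < g₂ b)
    (hs₁ : Summable fun a => klTerm (f₁ a) (g₁ a)) (hs₂ : Summable fun b => klTerm (f₂ b) (g₂ b)) :
    HasSum (fun v : α × β => klTerm (f₁ v.1 * f₂ v.2) (g₁ v.1 * g₂ v.2))
      (klDiv f₁ g₁ + klDiv f₂ g₂) := by
  have h := ((hasSum_mul_prod hs₁.hasSum hf₂).add (hasSum_mul_prod hf₁ hs₂.hasSum)).add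
    (hasSum_mul_prod (hg₁.sub hf₁) (hg₂.sub hf₂))
  convert h using 1
  · funext v
    exact klTerm_mul (hf₁0 _) (hf₂0 _) (h₁ _) (h₂ _)
  · simp [klDiv]

/-- The compensation identity: the mixture is the best common reference. -/
lemma sum_mul_klTerm_eq {ι : Type*} [Fintype ι] {w a : ι → ℝ} {r : ℝ}
    (hw : ∀ i, 0 ≤ w i) (ha : ∀ i, 0 ≤ a i) (hr : ∀ i, 0 < w i → 0 < a i → 0 < r) :
    ∑ i, w i * klTerm (a i) r
      = ∑ i, w i * klTerm (a i) ((∑ j, w j * a j) / ∑ j, w j)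
        + (∑ j, w j) * klTerm ((∑ j, w j * a j) / ∑ j, w j) r := by
  set W := ∑ j, w j
  set A := ∑ j, w j * a j
  set c := A / W
  have hwa : ∀ i, 0 ≤ w i * a i := fun i => mul_nonneg (hw i) (ha i)
  have key : ∀ i, w i * klTerm (a i) r
      = w i * klTerm (a i) c + w i * a i * log (c / r) + w i * (r - c) := by
    intro i
    rcases (hw i).eq_or_lt with h | hwi
    · rw [← h]; ring
    rcases (ha i).eq_or_lt with h | hai
    · rw [← h, klTerm_zero_left, klTerm_zero_left]; ring
    have hA : 0 < A := (mul_pos hwi hai).trans_le (single_le_sum (fun j _ => hwa j) (mem_univ i))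
    have hW : 0 < W := hwi.trans_le (single_le_sum (fun j _ => hw j) (mem_univ i))
    have hc : 0 < c := div_pos hA hW
    have hr := hr i hwi hai
    simp only [klTerm]
    rw [log_div hai.ne' hr.ne', log_div hai.ne' hc.ne', log_div hc.ne' hr.ne']
    ring
  have hWc : W * c = A := by
    rcases (sum_nonneg fun j _ => hw j : 0 ≤ W).eq_or_lt with h | h
    · have hw0 := (sum_eq_zero_iff_of_nonneg fun j _ => hw j).mp h.symm
      simp [A, c, hw0]
    · exact mul_div_cancel₀ _ h.ne'
  rw [sum_congr rfl fun i _ => key i, sum_add_distrib, sum_add_distrib, ← sum_mul, ← sum_mul,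
    klTerm]
  linear_combination (-log (c / r)) * hWc

end KL

section Stochastic

variable {α β : Type*}

structure IsStochastic (q : 𝒳 → α → ℝ) : Prop where
  nonneg : ∀ x a, 0 ≤ q x a
  hasSum : ∀ x, HasSum (q x) 1

lemma IsStochastic.prod {qa : 𝒳 → α → ℝ} {qb : 𝒳 → β → ℝ} (hqa : IsStochastic qa)
    (hqb : IsStochastic qb) : IsStochastic fun x (v : α × β) => qa x v.1 * qb x v.2 where
  nonneg x v := mul_nonneg (hqa.nonneg x v.1) (hqb.nonneg x v.2)
  hasSum x := by simpa using hasSum_mul_prod (hqa.hasSum x) (hqb.hasSum x)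

lemma IsStochastic.comp_equiv {q : 𝒳 → α → ℝ} (hq : IsStochastic q) (e : β ≃ α) :
    IsStochastic fun x => q x ∘ e where
  nonneg x b := hq.nonneg x (e b)
  hasSum x := e.hasSum_iff.mpr (hq.hasSum x)

lemma IsCondPMF.isStochastic {q : 𝒳 → ℕ → ℝ} (hq : IsCondPMF q) : IsStochastic q := by
  refine ⟨hq.1, fun x => ?_⟩
  have hs : Summable (q x) := by
    by_contra h
    simpa [tsum_eq_zero_of_not_summable h] using hq.2 x
  simpa [hq.2 x] using hs.hasSum

lemma IsStochastic.isCondPMF {q : 𝒳 → ℕ → ℝ} (hq : IsStochastic q) : IsCondPMF q :=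
  ⟨hq.nonneg, fun x => (hq.hasSum x).tsum_eq⟩

end Stochastic

section Kernel

variable [Fintype 𝒮] [Fintype 𝒳] {α β : Type*}

noncomputable def pXYm (p : 𝒮 × 𝒳 × 𝒴 → ℝ) (x : 𝒳) (y : 𝒴) : ℝ := ∑ s, p (s, x, y)

/-- `P(U = u | Y = y)`; junk value `0` when `P(Y = y) = 0`. -/
noncomputable def pUgivenY (p : 𝒮 × 𝒳 × 𝒴 → ℝ) (q : 𝒳 → α → ℝ) (y : 𝒴) (u : α) : ℝ :=
  (∑ x, pXYm p x y * q x u) / pYm p y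

variable {p : 𝒮 × 𝒳 × 𝒴 → ℝ} {q : 𝒳 → α → ℝ}

lemma sum_pXYm_left (y : 𝒴) : ∑ x, pXYm p x y = pYm p y := Finset.sum_comm

section Nonneg

variable (hp0 : ∀ z, 0 ≤ p z)
include hp0

omit [Fintype 𝒳] in
lemma pXYm_nonneg (x : 𝒳) (y : 𝒴) : 0 ≤ pXYm p x y := sum_nonneg fun _ _ => hp0 _

lemma pYm_nonneg (y : 𝒴) : 0 ≤ pYm p y := sum_nonneg fun _ _ => sum_nonneg fun _ _ => hp0 _

lemma pXYm_le_pYm (x : 𝒳) (y : 𝒴) : pXYm p x y ≤ pYm p y := by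
  rw [← sum_pXYm_left]
  exact single_le_sum (fun x _ => pXYm_nonneg hp0 x y) (mem_univ x)

lemma pYm_mul_pUgivenY (y : 𝒴) (u : α) :
    pYm p y * pUgivenY p q y u = ∑ x, pXYm p x y * q x u := by
  rcases (pYm_nonneg hp0 y).eq_or_lt with h | h
  · have hW : ∀ x, pXYm p x y = 0 := fun x =>
      le_antisymm (h ▸ pXYm_le_pYm hp0 x y) (pXYm_nonneg hp0 x y)
    simp [← h, hW]
  · exact mul_div_cancel₀ _ h.ne'

variable (hq : IsStochastic q)
include hq

lemma pUgivenY_nonneg (y : 𝒴) (u : α) : 0 ≤ pUgivenY p q y u :=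
  div_nonneg (sum_nonneg fun x _ => mul_nonneg (pXYm_nonneg hp0 x y) (hq.nonneg x u))
    (pYm_nonneg hp0 y)

lemma pXYm_mul_le (x : 𝒳) (y : 𝒴) (u : α) :
    pXYm p x y * q x u ≤ pYm p y * pUgivenY p q y u := by
  rw [pYm_mul_pUgivenY hp0]
  exact single_le_sum (fun x _ => mul_nonneg (pXYm_nonneg hp0 x y) (hq.nonneg x u)) (mem_univ x)

lemma pUgivenY_pos {x : 𝒳} {y : 𝒴} {u : α} (hW : 0 < pXYm p x y) (hqxu : 0 < q x u) :
    0 < pUgivenY p q y u :=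
  div_pos ((mul_pos hW hqxu).trans_le
      (single_le_sum (fun x _ => mul_nonneg (pXYm_nonneg hp0 x y) (hq.nonneg x u)) (mem_univ x)))
    (hW.trans_le (pXYm_le_pYm hp0 x y))

lemma exists_pos_of_pUgivenY_pos {y : 𝒴} {u : α} (h : 0 < pUgivenY p q y u) :
    ∃ x, 0 < pXYm p x y ∧ 0 < q x u := by
  by_contra! hne
  have h0 : ∑ x, pXYm p x y * q x u = 0 := sum_eq_zero fun x _ => by
    rcases (pXYm_nonneg hp0 x y).eq_or_lt with hW | hW
    · rw [← hW, zero_mul]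
    · rw [le_antisymm (hne x hW) (hq.nonneg x u), mul_zero]
  simp [pUgivenY, h0] at h

omit hp0 in
lemma hasSum_pUgivenY {y : 𝒴} (hy : 0 < pYm p y) : HasSum (pUgivenY p q y) 1 := by
  have h := (hasSum_sum (s := univ) fun x _ =>
    (hq.hasSum x).mul_left (pXYm p x y)).div_const (pYm p y)
  rwa [← Finset.sum_mul, mul_one, sum_pXYm_left, div_self hy.ne'] at h

lemma summable_klTerm_pUgivenY {x : 𝒳} {y : 𝒴} (hW : 0 < pXYm p x y) :
    Summable fun u => klTerm (q x u) (pUgivenY p q y u) :=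
  summable_klTerm (hq.hasSum x).summable
    (hasSum_pUgivenY hq (hW.trans_le (pXYm_le_pYm hp0 x y))).summable
    (hq.nonneg x) (pUgivenY_nonneg hp0 hq y) (C := pYm p y / pXYm p x y) fun u => by
      rw [div_mul_eq_mul_div, le_div_iff₀' hW]
      exact pXYm_mul_le hp0 hq x y u

lemma sum_mul_klDiv_eq (y : 𝒴) {r : α → ℝ} (hr : ∀ x u, 0 < pXYm p x y → 0 < q x u → 0 < r u)
    (hs : ∀ x, 0 < pXYm p x y → Summable fun u => klTerm (q x u) (r u)) :
    ∑ x, pXYm p x y * klDiv (q x) r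
      = ∑ x, pXYm p x y * klDiv (q x) (pUgivenY p q y)
        + pYm p y * klDiv (pUgivenY p q y) r := by
  have hsummable : ∀ g : 𝒳 → α → ℝ,
      (∀ x, 0 < pXYm p x y → Summable fun u => klTerm (q x u) (g x u)) →
      ∀ x, Summable fun u => pXYm p x y * klTerm (q x u) (g x u) := fun g hg x => by
    rcases (pXYm_nonneg hp0 x y).eq_or_lt with h | h
    · simp [← h]
    · exact (hg x h).mul_left _
  have hsr := hsummable (fun _ => r) hs
  have hsc := hsummable (fun _ => pUgivenY p q y) fun x => summable_klTerm_pUgivenY hp0 hq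
  have hpt : ∀ u, ∑ x, pXYm p x y * klTerm (q x u) (r u)
      = ∑ x, pXYm p x y * klTerm (q x u) (pUgivenY p q y u)
        + pYm p y * klTerm (pUgivenY p q y u) (r u) := fun u => by
    have h := sum_mul_klTerm_eq (pXYm_nonneg hp0 · y) (hq.nonneg · u) (hr · u)
    rwa [sum_pXYm_left] at h
  have hrest : Summable fun u => pYm p y * klTerm (pUgivenY p q y u) (r u) :=
    ((summable_sum fun x _ => hsr x).sub (summable_sum fun x _ => hsc x)).congr fun u => by
      rw [hpt u]; ring
  simp only [klDiv, ← tsum_mul_left]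
  rw [← Summable.tsum_finsetSum fun x _ => hsr x, tsum_congr hpt,
    (summable_sum fun x _ => hsc x).tsum_add hrest, Summable.tsum_finsetSum fun x _ => hsc x]

lemma sum_mul_klDiv_pUgivenY_le (y : 𝒴) {r : α → ℝ} (hr0 : ∀ u, 0 ≤ r u)
    (hr : ∀ x u, 0 < pXYm p x y → 0 < q x u → 0 < r u)
    (hs : ∀ x, 0 < pXYm p x y → Summable fun u => klTerm (q x u) (r u)) :
    ∑ x, pXYm p x y * klDiv (q x) (pUgivenY p q y) ≤ ∑ x, pXYm p x y * klDiv (q x) r := by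
  rw [sum_mul_klDiv_eq hp0 hq y hr hs]
  refine le_add_of_nonneg_right (mul_nonneg (pYm_nonneg hp0 y) (tsum_nonneg fun u => ?_))
  refine klTerm_nonneg (pUgivenY_nonneg hp0 hq y u) (hr0 u) fun hc => ?_
  obtain ⟨x, hW, hqxu⟩ := exists_pos_of_pUgivenY_pos hp0 hq hc
  exact hr x u hW hqxu

end Nonneg

variable [Fintype 𝒴]

/-- `I(X;U|Y)` in nats, as the average divergence of `P_{U|X=x}` from `P_{U|Y=y}`. -/
noncomputable def condMutualInfo (p : 𝒮 × 𝒳 × 𝒴 → ℝ) (q : 𝒳 → α → ℝ) : ℝ :=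
  ∑ y, ∑ x, pXYm p x y * klDiv (q x) (pUgivenY p q y)

lemma condMutualInfo_comp_equiv (e : β ≃ α) :
    condMutualInfo p (fun x => q x ∘ e) = condMutualInfo p q :=
  sum_congr rfl fun y _ => sum_congr rfl fun x _ =>
    congrArg (pXYm p x y * ·) (klDiv_comp_equiv e (q x) (pUgivenY p q y))

lemma condMutualInfo_prod_le {qa : 𝒳 → α → ℝ} {qb : 𝒳 → β → ℝ} (hp0 : ∀ z, 0 ≤ p z)
    (hqa : IsStochastic qa) (hqb : IsStochastic qb) :
    condMutualInfo p (fun x (v : α × β) => qa x v.1 * qb x v.2)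
      ≤ condMutualInfo p qa + condMutualInfo p qb := by
  rw [condMutualInfo, condMutualInfo, condMutualInfo, ← sum_add_distrib]
  refine sum_le_sum fun y _ => ?_
  have hprod : ∀ x, 0 < pXYm p x y → HasSum
      (fun v : α × β => klTerm (qa x v.1 * qb x v.2) (pUgivenY p qa y v.1 * pUgivenY p qb y v.2))
      (klDiv (qa x) (pUgivenY p qa y) + klDiv (qb x) (pUgivenY p qb y)) := fun x hW =>
    have hy := hW.trans_le (pXYm_le_pYm hp0 x y)
    hasSum_klTerm_prod (hqa.hasSum x) (hasSum_pUgivenY hqa hy) (hqb.hasSum x)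
      (hasSum_pUgivenY hqb hy) (hqa.nonneg x) (hqb.nonneg x)
      (fun _ => pUgivenY_pos hp0 hqa hW) (fun _ => pUgivenY_pos hp0 hqb hW)
      (summable_klTerm_pUgivenY hp0 hqa hW) (summable_klTerm_pUgivenY hp0 hqb hW)
  calc _ ≤ ∑ x, pXYm p x y * klDiv (fun v : α × β => qa x v.1 * qb x v.2)
        (fun v => pUgivenY p qa y v.1 * pUgivenY p qb y v.2) :=
      sum_mul_klDiv_pUgivenY_le hp0 (hqa.prod hqb) y
        (fun v => mul_nonneg (pUgivenY_nonneg hp0 hqa y v.1) (pUgivenY_nonneg hp0 hqb y v.2))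
        (fun x v hW hq => mul_pos
          (pUgivenY_pos hp0 hqa hW (pos_of_mul_pos_left hq (hqb.nonneg x v.2)))
          (pUgivenY_pos hp0 hqb hW (pos_of_mul_pos_right hq (hqa.nonneg x v.1))))
        fun x hW => (hprod x hW).summable
    _ = _ := by
      rw [← sum_add_distrib]
      refine sum_congr rfl fun x _ => ?_
      rcases (pXYm_nonneg hp0 x y).eq_or_lt with h | h
      · simp [← h]
      · rw [klDiv, (hprod x h).tsum_eq, mul_add]

end Kernel

section Rate

variable [Fintype 𝒮] [Fintype 𝒳] [Fintype 𝒴] {p : 𝒮 × 𝒳 × 𝒴 → ℝ} {q : 𝒳 → ℕ → ℝ}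

omit [Fintype 𝒳] in
lemma sum_pXYm_right (x : 𝒳) : ∑ y, pXYm p x y = pXm p x := Finset.sum_comm

lemma sum_pXm_eq_sum_pYm : ∑ x, pXm p x = ∑ y, pYm p y := by
  simp only [← sum_pXYm_left, ← sum_pXYm_right]
  exact Finset.sum_comm

lemma hasSum_pUm (hq : IsStochastic q) : HasSum (pUm p q) (∑ x, pXm p x) :=
  hasSum_sum (s := univ) fun x _ => by simpa using (hq.hasSum x).mul_left (pXm p x)

variable (hp0 : ∀ z, 0 ≤ p z) (hq : IsStochastic q)
include hp0

omit [Fintype 𝒳] in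
lemma pXYm_le_pXm (x : 𝒳) (y : 𝒴) : pXYm p x y ≤ pXm p x := by
  rw [← sum_pXYm_right]
  exact single_le_sum (fun y _ => pXYm_nonneg hp0 x y) (mem_univ y)

omit [Fintype 𝒳] in
lemma pXm_nonneg (x : 𝒳) : 0 ≤ pXm p x := sum_nonneg fun _ _ => sum_nonneg fun _ _ => hp0 _

omit [Fintype 𝒴] in
lemma pYUm_eq (y : 𝒴) (u : ℕ) : pYUm p q y u = pYm p y * pUgivenY p q y u := by
  rw [pYm_mul_pUgivenY hp0]
  simp only [pYUm, pXYm, sum_mul]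
  exact sum_comm

include hq

lemma pUm_nonneg (u : ℕ) : 0 ≤ pUm p q u :=
  sum_nonneg fun x _ => mul_nonneg (pXm_nonneg hp0 x) (hq.nonneg x u)

lemma pXm_mul_le_pUm (x : 𝒳) (u : ℕ) : pXm p x * q x u ≤ pUm p q u :=
  single_le_sum (fun x _ => mul_nonneg (pXm_nonneg hp0 x) (hq.nonneg x u)) (mem_univ x)

lemma pYm_mul_pUgivenY_le_pUm (y : 𝒴) (u : ℕ) : pYm p y * pUgivenY p q y u ≤ pUm p q u := by
  rw [pYm_mul_pUgivenY hp0]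
  exact sum_le_sum fun x _ => mul_le_mul_of_nonneg_right (pXYm_le_pXm hp0 x y) (hq.nonneg x u)

lemma summable_klTerm_pUm {x : 𝒳} (hx : 0 < pXm p x) :
    Summable fun u => klTerm (q x u) (pUm p q u) :=
  summable_klTerm (hq.hasSum x).summable (hasSum_pUm hq).summable (hq.nonneg x)
    (pUm_nonneg hp0 hq) (C := (pXm p x)⁻¹) fun u => by
      rw [inv_mul_eq_div, le_div_iff₀' hx]
      exact pXm_mul_le_pUm hp0 hq x u

lemma IXU_eq :
    IXU p q = (∑ x, pXm p x * (klDiv (q x) (pUm p q) + 1 - ∑ x', pXm p x')) / log 2 := by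
  rw [IXU, sum_div]
  refine sum_congr rfl fun x _ => ?_
  rcases (pXm_nonneg hp0 x).eq_or_lt with h | h
  · simp [← h]
  rw [← tsum_mul_log_div (hq.hasSum x) (hasSum_pUm hq) (summable_klTerm_pUm hp0 hq h),
    ← tsum_mul_left, ← tsum_div_const]
  exact tsum_congr fun u => by rw [logb]; ring

lemma IUY_eq :
    IUY p q = (∑ y, pYm p y * (klDiv (pUgivenY p q y) (pUm p q) + 1 - ∑ x, pXm p x)) / log 2 := by
  rw [IUY, sum_div]
  refine sum_congr rfl fun y _ => ?_
  rcases (pYm_nonneg hp0 y).eq_or_lt with h | h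
  · simp [pYUm_eq hp0, ← h]
  have hs : Summable fun u => klTerm (pUgivenY p q y u) (pUm p q u) :=
    summable_klTerm (hasSum_pUgivenY hq h).summable (hasSum_pUm hq).summable
      (pUgivenY_nonneg hp0 hq y) (pUm_nonneg hp0 hq) (C := (pYm p y)⁻¹) fun u => by
        rw [inv_mul_eq_div, le_div_iff₀' h]
        exact pYm_mul_pUgivenY_le_pUm hp0 hq y u
  rw [← tsum_mul_log_div (hasSum_pUgivenY hq h) (hasSum_pUm hq) hs, ← tsum_mul_left,
    ← tsum_div_const]
  refine tsum_congr fun u => ?_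
  rw [pYUm_eq hp0, mul_div_mul_left _ _ h.ne', logb]
  ring

lemma IXU_sub_IUY : IXU p q - IUY p q = condMutualInfo p q / log 2 := by
  have hsplit : ∑ x, pXm p x * klDiv (q x) (pUm p q)
      = condMutualInfo p q + ∑ y, pYm p y * klDiv (pUgivenY p q y) (pUm p q) := by
    simp only [← sum_pXYm_right, sum_mul]
    rw [sum_comm, condMutualInfo, ← sum_add_distrib]
    refine sum_congr rfl fun y _ => sum_mul_klDiv_eq hp0 hq y (fun x u hW hqxu => ?_)
      fun x hW => summable_klTerm_pUm hp0 hq (hW.trans_le (pXYm_le_pXm hp0 x y))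
    exact (mul_pos (hW.trans_le (pXYm_le_pXm hp0 x y)) hqxu).trans_le (pXm_mul_le_pUm hp0 hq x u)
  rw [IXU_eq hp0 hq, IUY_eq hp0 hq, ← sub_div]
  congr 1
  simp only [mul_sub, mul_add, mul_one, sum_sub_distrib, sum_add_distrib, ← sum_mul, hsplit,
    ← sum_pXm_eq_sum_pYm]
  ring

end Rate

section Pair

variable {qa qb : 𝒳 → ℕ → ℝ}

/-- The auxiliary variable `(U_a, U_b)`, conditionally independent given `X`, coded in `ℕ`. -/
noncomputable def pairKernel (qa qb : 𝒳 → ℕ → ℝ) : 𝒳 → ℕ → ℝ :=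
  fun x => (fun v : ℕ × ℕ => qa x v.1 * qb x v.2) ∘ Nat.pairEquiv.symm

lemma IsStochastic.pairKernel (hqa : IsStochastic qa) (hqb : IsStochastic qb) :
    IsStochastic (pairKernel qa qb) :=
  (hqa.prod hqb).comp_equiv Nat.pairEquiv.symm

variable [Fintype 𝒮] [Fintype 𝒳] [Fintype 𝒴] {p : 𝒮 × 𝒳 × 𝒴 → ℝ}

lemma EdX_pairKernel (hqb : IsStochastic qb) (d : 𝒳 × Xh → ℝ) (xh : ℕ × 𝒴 → Xh) :
    EdX p (pairKernel qa qb) d (fun uy => xh ((Nat.pairEquiv.symm uy.1).1, uy.2))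
      = EdX p qa d xh := by
  refine sum_congr rfl fun s _ => sum_congr rfl fun x _ => sum_congr rfl fun y _ => ?_
  refine (tsum_congr fun u => ?_).trans ((Nat.pairEquiv.symm.tsum_eq fun v =>
    p (s, x, y) * qa x v.1 * d (x, xh (v.1, y)) * qb x v.2).trans
      (tsum_mul_prod_of_hasSum_one (fun a => p (s, x, y) * qa x a * d (x, xh (a, y)))
        (hqb.hasSum x)))
  simp only [pairKernel, Function.comp]
  ring

lemma EdS_pairKernel (hqa : IsStochastic qa) (ds : 𝒮 × Sh → ℝ) (sh : ℕ × 𝒴 → Sh) :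
    EdS p (pairKernel qa qb) ds (fun uy => sh ((Nat.pairEquiv.symm uy.1).2, uy.2))
      = EdS p qb ds sh := by
  refine sum_congr rfl fun s _ => sum_congr rfl fun x _ => sum_congr rfl fun y _ => ?_
  refine (tsum_congr fun u => ?_).trans ((Nat.pairEquiv.symm.tsum_eq fun v =>
    qa x v.1 * (p (s, x, y) * qb x v.2 * ds (s, sh (v.2, y)))).trans
      (tsum_prod_mul_of_hasSum_one (hqa.hasSum x)
        fun b => p (s, x, y) * qb x b * ds (s, sh (b, y))))
  simp only [pairKernel, Function.comp]
  ring

lemma IXU_sub_IUY_pairKernel_le (hp0 : ∀ z, 0 ≤ p z) (hqa : IsStochastic qa)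
    (hqb : IsStochastic qb) :
    IXU p (pairKernel qa qb) - IUY p (pairKernel qa qb)
      ≤ (IXU p qa - IUY p qa) + (IXU p qb - IUY p qb) := by
  rw [IXU_sub_IUY hp0 hqa, IXU_sub_IUY hp0 hqb, IXU_sub_IUY hp0 (hqa.pairKernel hqb), ← add_div]
  unfold pairKernel
  rw [condMutualInfo_comp_equiv]
  gcongr
  exact condMutualInfo_prod_le hp0 hqa hqb

lemma RWZ_le_add (hp0 : ∀ z, 0 ≤ p z) (hqa : IsCondPMF qa) (hqb : IsCondPMF qb)
    {d : 𝒳 × Xh → ℝ} {ds : 𝒮 × Sh → ℝ} {D Ds : ℝ} {xh : ℕ × 𝒴 → Xh} {sh : ℕ × 𝒴 → Sh}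
    (hxa : EdX p qa d xh ≤ D) (hsb : EdS p qb ds sh ≤ Ds) :
    RWZ p d ds D Ds ≤ (((IXU p qa - IUY p qa) + (IXU p qb - IUY p qb) : ℝ) : EReal) := by
  have hqa := hqa.isStochastic
  have hqb := hqb.isStochastic
  refine (sInf_le ?_).trans (EReal.coe_le_coe_iff.mpr (IXU_sub_IUY_pairKernel_le hp0 hqa hqb))
  exact ⟨pairKernel qa qb, _, _, ⟨(hqa.pairKernel hqb).isCondPMF,
    (EdX_pairKernel hqb d xh).trans_le hxa, (EdS_pairKernel hqa ds sh).trans_le hsb⟩, rfl⟩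

end Pair

theorem RWZ_le_sum_general
    [Fintype 𝒮] [Fintype 𝒳] [Fintype 𝒴]
    (p : 𝒮 × 𝒳 × 𝒴 → ℝ) (hp0 : ∀ z, 0 ≤ p z)
    (d : 𝒳 × Xh → ℝ)
    (ds : 𝒮 × Sh → ℝ)
    (D Ds : ℝ) (rX rS : ℝ)
    (hX : RWZX p d D = ((rX : ℝ) : EReal))
    (hS : RWZS p ds Ds = ((rS : ℝ) : EReal)) :
    RWZ p d ds D Ds ≤ ((rX + rS : ℝ) : EReal) := by
  refine EReal.le_of_forall_lt_iff_le.mp fun t ht => ?_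
  set ε := (t - (rX + rS)) / 2
  have hε : 0 < ε := by
    have : rX + rS < t := by exact_mod_cast ht
    simp only [ε]; linarith
  obtain ⟨_, ⟨qa, xh, hqa, hxa, rfl⟩, ha⟩ : ∃ r ∈ _, r < ((rX + ε : ℝ) : EReal) :=
    sInf_lt_iff.mp (hX.trans_lt (by exact_mod_cast lt_add_of_pos_right rX hε))
  obtain ⟨_, ⟨qb, sh, hqb, hsb, rfl⟩, hb⟩ : ∃ r ∈ _, r < ((rS + ε : ℝ) : EReal) :=
    sInf_lt_iff.mp (hS.trans_lt (by exact_mod_cast lt_add_of_pos_right rS hε))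
  refine (RWZ_le_add hp0 hqa hqb hxa hsb).trans ?_
  have ha : IXU p qa - IUY p qa < rX + ε := by exact_mod_cast ha
  have hb : IXU p qb - IUY p qb < rS + ε := by exact_mod_cast hb
  exact_mod_cast (by simp only [ε] at ha hb; linarith : _ ≤ t)

/-- **Lemma 2 (upper bound).** For all `D, Ds ≥ 0` at which `R_WZ^X(D)` and `R_WZ^S(Ds)` are
finite (with real values `rX`, `rS`), `R_WZ(D, Ds) ≤ R_WZ^X(D) + R_WZ^S(Ds)`. -/
theorem RWZ_le_sum
    [Fintype 𝒮] [Fintype 𝒳] [Fintype 𝒴] [Fintype Sh] [Fintype Xh]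
    [Nonempty 𝒮] [Nonempty 𝒳] [Nonempty 𝒴] [Nonempty Sh] [Nonempty Xh]
    (p : 𝒮 × 𝒳 × 𝒴 → ℝ) (hp0 : ∀ z, 0 ≤ p z) (hp1 : ∑ z : 𝒮 × 𝒳 × 𝒴, p z = 1)
    (d : 𝒳 × Xh → ℝ) (hd0 : ∀ z, 0 ≤ d z)
    (ds : 𝒮 × Sh → ℝ) (hds0 : ∀ z, 0 ≤ ds z)
    (D Ds : ℝ) (hD : 0 ≤ D) (hDs : 0 ≤ Ds) (rX rS : ℝ)
    (hX : RWZX p d D = ((rX : ℝ) : EReal))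
    (hS : RWZS p ds Ds = ((rS : ℝ) : EReal)) :
    RWZ p d ds D Ds ≤ ((rX + rS : ℝ) : EReal) :=
  RWZ_le_sum_general p hp0 d ds D Ds rX rS hX hS

end Stmt5
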